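/- arXiv:2001.07517 — 3 statements merged into one kernel-verified Lean document; each statement's English description precedes it below -/
import Mathlib

section
/- Let |α| < π/2, 0 ≤ β < 1, m ≥ 1 an integer, and 0 ≤ q < 1. Then ∑_{n=2}^∞ n(2n - cos α - β) C(n+m-2, m-1) q^{n-1}(1-q)^m ≤ cos α - β if and only if 2q²m(m+1)/(1-q)² + (6 - cos α - β)·qm/(1-q) + (2 - cos α - β)(1 - (1-q)^m) ≤ cos α - β. -/
/-!
The weights `C(j+k, k) q^j (1-q)^(k+1)` form the negative binomial distribution, whose factorial
moments are explicit: trinomial revision `C(j+k, k) C(j, r) = C(k+r, k) C(j+k, k+r)` turns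
`∑ C(j+k, k) C(j, r) q^j` into a shifted copy of `∑ C(j+k, k) q^j = (1-q)^-(k+1)`.
Expanding `n (2n - c)` in the basis `C(j, r)` therefore evaluates the series in closed form, and
the closed form is exactly the left-hand side of the second inequality.
-/

open Finset

variable {𝕜 : Type*} [NormedField 𝕜] {q : 𝕜}

lemma hasSum_choose_add_mul_geometric (k r : ℕ) (hq : ‖q‖ < 1) :
    HasSum (fun j : ℕ ↦ ((j + k).choose (k + r) : 𝕜) * q ^ j)
      (q ^ r / (1 - q) ^ (k + r + 1)) := by
  rw [← hasSum_nat_add_iff' r]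
  have hvanish : ∑ j ∈ range r, ((j + k).choose (k + r) : 𝕜) * q ^ j = 0 :=
    sum_eq_zero fun j hj ↦ by
      rw [Nat.choose_eq_zero_of_lt (by rw [mem_range] at hj; omega), Nat.cast_zero, zero_mul]
  rw [hvanish, sub_zero]
  convert! (hasSum_choose_mul_geometric_of_norm_lt_one (k + r) hq).mul_left (q ^ r) using 1
  · funext i
    rw [show i + r + k = i + (k + r) by omega, pow_add]
    ring
  · ring

lemma hasSum_choose_mul_choose_mul_geometric (k r : ℕ) (hq : ‖q‖ < 1) :
    HasSum (fun j : ℕ ↦ ((j + k).choose k * j.choose r : 𝕜) * q ^ j)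
      ((k + r).choose k * q ^ r / (1 - q) ^ (k + r + 1)) := by
  convert! (hasSum_choose_add_mul_geometric k r hq).mul_left ((k + r).choose k : 𝕜) using 1
  · funext j
    have h := Nat.choose_mul (n := j + k) (k := k + r) (s := k) (by omega)
    rw [Nat.add_sub_cancel, Nat.add_sub_cancel_left] at h
    have hcast :
        ((j + k).choose k * j.choose r : 𝕜) = (j + k).choose (k + r) * (k + r).choose k := by
      simpa only [Nat.cast_mul] using congrArg (Nat.cast : ℕ → 𝕜) h.symm
    rw [hcast]
    ring
  · ring

variable [CharZero 𝕜]

lemma hasSum_mul_choose_mul_geometric (k : ℕ) (c : 𝕜) (hq : ‖q‖ < 1) :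
    HasSum (fun j : ℕ ↦ ((j : 𝕜) + 1) * (2 * ((j : 𝕜) + 1) - c) * (j + k).choose k * q ^ j
        * (1 - q) ^ (k + 1))
      (2 * q ^ 2 * (k + 1) * (k + 2) / (1 - q) ^ 2 + (6 - c) * (q * (k + 1) / (1 - q))
        + (2 - c)) := by
  have hq1 : 1 - q ≠ 0 := sub_ne_zero.2 fun h ↦ by simp [← h] at hq
  have moment (r : ℕ) := hasSum_choose_mul_choose_mul_geometric k r hq
  convert! (((moment 2).mul_left 4).add ((moment 1).mul_left (6 - c)) |>.add
    ((moment 0).mul_left (2 - c))).mul_right ((1 - q) ^ (k + 1)) using 1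
  · funext j
    simp only [Nat.cast_choose_two, Nat.choose_one_right, Nat.choose_zero_right]
    push_cast
    ring
  · rw [Nat.choose_symm_add, Nat.choose_symm_add]
    simp only [add_zero, Nat.cast_choose_two, Nat.choose_one_right, Nat.choose_self]
    field_simp
    push_cast
    ring

/-- `C(n+m-2, m-1) q^(n-1) (1-q)^m` is the `n`-th coefficient of `Φ_q^m`; the series starts at
`n = 2`, whence the shift of the index by two. -/
lemma hasSum_mul_Phi_coeff (m : ℕ) (hm : 1 ≤ m) (c : 𝕜) (hq : ‖q‖ < 1) :
    HasSum (fun n : ℕ ↦ ((n : 𝕜) + 2) * (2 * ((n : 𝕜) + 2) - c)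
        * (((n + 2) + m - 2).choose (m - 1) : 𝕜) * q ^ (n + 1) * (1 - q) ^ m)
      (2 * q ^ 2 * m * (m + 1) / (1 - q) ^ 2 + (6 - c) * (q * m / (1 - q))
        + (2 - c) * (1 - (1 - q) ^ m)) := by
  obtain ⟨k, rfl⟩ := Nat.exists_eq_add_of_le' hm
  have h := (hasSum_nat_add_iff' 1).2 (hasSum_mul_choose_mul_geometric k c hq)
  convert! h using 1
  · funext n
    rw [show n + 2 + (k + 1) - 2 = n + 1 + k by omega, Nat.add_sub_cancel]
    push_cast
    ring
  · simp only [Nat.cast_add, Nat.cast_one, range_one, sum_singleton, CharP.cast_eq_zero, zero_add,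
      mul_one, one_mul, Nat.choose_self, pow_zero]
    ring

theorem Phi_mem_UCT_iff_general (m : ℕ) (hm : 1 ≤ m) (q : ℝ) (hq0 : 0 ≤ q) (hq1 : q < 1)
    (α β : ℝ) :
    (∑' n : ℕ, ((n : ℝ) + 2) * (2 * ((n : ℝ) + 2) - Real.cos α - β) *
        (((n + 2) + m - 2).choose (m - 1) : ℝ) * q ^ (n + 1) * (1 - q) ^ m
      ≤ Real.cos α - β)
    ↔ 2 * q ^ 2 * m * (m + 1) / (1 - q) ^ 2 + (6 - Real.cos α - β) * (q * m / (1 - q))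
        + (2 - Real.cos α - β) * (1 - (1 - q) ^ m) ≤ Real.cos α - β := by
  have hq : ‖q‖ < 1 := by rwa [Real.norm_of_nonneg hq0]
  simp only [sub_sub]
  rw [(hasSum_mul_Phi_coeff m hm (Real.cos α + β) hq).tsum_eq]

theorem Phi_mem_UCT_iff (m : ℕ) (hm : 1 ≤ m) (q : ℝ) (hq0 : 0 ≤ q) (hq1 : q < 1)
    (α β : ℝ) (hα : |α| < Real.pi / 2) (hβ0 : 0 ≤ β) (hβ1 : β < 1) :
    (∑' n : ℕ, ((n : ℝ) + 2) * (2 * ((n : ℝ) + 2) - Real.cos α - β) *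
        (((n + 2) + m - 2).choose (m - 1) : ℝ) * q ^ (n + 1) * (1 - q) ^ m
      ≤ Real.cos α - β)
    ↔ 2 * q ^ 2 * m * (m + 1) / (1 - q) ^ 2 + (6 - Real.cos α - β) * (q * m / (1 - q))
        + (2 - Real.cos α - β) * (1 - (1 - q) ^ m) ≤ Real.cos α - β :=
  Phi_mem_UCT_iff_general m hm q hq0 hq1 α β
end

section
/- Let m > 1 be an integer, 0 < q < 1, |α| < π/2 and 0 ≤ β < 1. Then ∑_{n=2}^∞ (1/n)(2n - cos α - β) C(n+m-2, m-1) q^{n-1}(1-q)^m = 2(1 - (1-q)^m) - ((cos α + β)/(q(m-1)))·((1-q) - (1-q)^m - q(m-1)(1-q)^m). -/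
/-!
Write `m = k + 2` and `c = cos α + β`. The `n`-th term is `2 aₙ - c aₙ / (n + 2)` with
`aₙ = C(n+k+2, k+1) q^(n+1) (1-q)^m`. Since `C(N, k+1) (N - k) = C(N, k) (k + 1)`, the factor
`1 / (n + 2)` can be traded for `1 / (k + 1)` by lowering the binomial coefficient, after which both
parts are tails of negative binomial series `∑ C(n+j, j) qⁿ = (1 - q)^(-(j+1))`.
-/

open Finset

theorem Nat.cast_choose_succ_right_div_sub {K : Type*} [Field K] [CharZero K] (N k : ℕ)
    (h : k < N) :
    (N.choose (k + 1) : K) / (N - k : ℕ) = N.choose k / (k + 1) := by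
  have hNk : ((N - k : ℕ) : K) ≠ 0 := by exact_mod_cast (Nat.sub_pos_of_lt h).ne'
  rw [div_eq_div_iff hNk (Nat.cast_add_one_ne_zero k)]
  exact_mod_cast Nat.choose_succ_right_eq N k

section NegativeBinomialTail

variable {𝕜 : Type*} [NormedField 𝕜] {q : 𝕜}

theorem one_sub_ne_zero_of_norm_lt_one (hq : ‖q‖ < 1) : 1 - q ≠ 0 := by
  rw [sub_ne_zero]
  rintro rfl
  simp at hq

theorem hasSum_choose_mul_geometric_nat_add (k j : ℕ) (hq : ‖q‖ < 1) :
    HasSum (fun n : ℕ => ((n + j + k).choose k : 𝕜) * q ^ (n + j))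
      (1 / (1 - q) ^ (k + 1) - ∑ i ∈ range j, ((i + k).choose k : 𝕜) * q ^ i) :=
  (hasSum_nat_add_iff' j).2 (hasSum_choose_mul_geometric_of_norm_lt_one k hq)

theorem hasSum_choose_mul_geometric_succ_mul_one_sub_pow (k : ℕ) (hq : ‖q‖ < 1) :
    HasSum (fun n : ℕ => ((n + 1 + k).choose k : 𝕜) * q ^ (n + 1) * (1 - q) ^ (k + 1))
      (1 - (1 - q) ^ (k + 1)) := by
  have h1q := pow_ne_zero (k + 1) (one_sub_ne_zero_of_norm_lt_one hq)
  convert! (hasSum_choose_mul_geometric_nat_add k 1 hq).mul_right ((1 - q) ^ (k + 1)) using 1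
  simp [sub_mul, h1q]

theorem hasSum_choose_div_mul_geometric_succ_mul_one_sub_pow [CharZero 𝕜] (k : ℕ)
    (hq0 : q ≠ 0) (hq : ‖q‖ < 1) :
    HasSum (fun n : ℕ => ((n + 2 + k).choose (k + 1) : 𝕜) / (n + 2) * q ^ (n + 1) *
        (1 - q) ^ (k + 2))
      (((1 - q) - (1 - q) ^ (k + 2) - q * (k + 1) * (1 - q) ^ (k + 2)) / (q * (k + 1))) := by
  have h1q := one_sub_ne_zero_of_norm_lt_one hq
  have hk : (k + 1 : 𝕜) ≠ 0 := Nat.cast_add_one_ne_zero k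
  convert! (hasSum_choose_mul_geometric_nat_add k 2 hq).mul_right
    ((1 - q) ^ (k + 2) / (q * (k + 1))) using 1
  · ext n
    have h := Nat.cast_choose_succ_right_div_sub (K := 𝕜) (n + 2 + k) k (by omega)
    rw [show n + 2 + k - k = n + 2 by omega] at h
    push_cast at h
    rw [h]
    field_simp
    ring
  · simp only [sum_range_succ, range_zero, sum_empty, zero_add, Nat.choose_self, add_comm 1 k,
      Nat.choose_succ_self_right]
    push_cast
    field_simp
    ring

end NegativeBinomialTail

theorem pascal_TSP_reciprocal_sum_general (m : ℕ) (hm : 1 < m) (q : ℝ) (hq0 : 0 < q) (hq1 : q < 1)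
    (α β : ℝ) :
    ∑' n : ℕ, (1 / ((n : ℝ) + 2)) * (2 * ((n : ℝ) + 2) - Real.cos α - β) *
        (((n + 2) + m - 2).choose (m - 1) : ℝ) * q ^ (n + 1) * (1 - q) ^ m
      = 2 * (1 - (1 - q) ^ m)
        - ((Real.cos α + β) / (q * ((m : ℝ) - 1))) *
            ((1 - q) - (1 - q) ^ m - q * ((m : ℝ) - 1) * (1 - q) ^ m) := by
  obtain ⟨k, rfl⟩ : ∃ k, m = k + 2 := ⟨m - 2, by omega⟩
  have hq : ‖q‖ < 1 := abs_lt.2 ⟨by linarith, hq1⟩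
  have h := ((hasSum_choose_mul_geometric_succ_mul_one_sub_pow (k + 1) hq).mul_left 2).sub
    ((hasSum_choose_div_mul_geometric_succ_mul_one_sub_pow k hq0.ne' hq).mul_left
      (Real.cos α + β))
  refine (h.congr_fun fun n => ?_).tsum_eq.trans ?_
  · rw [show n + 2 + (k + 2) - 2 = n + 2 + k by omega, show n + 1 + (k + 1) = n + 2 + k by omega,
      show k + 2 - 1 = k + 1 by omega]
    field_simp
    ring
  · have hk : (k : ℝ) + 1 ≠ 0 := by positivity
    push_cast
    rw [show (k : ℝ) + 2 - 1 = k + 1 by ring]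
    field_simp

theorem pascal_TSP_reciprocal_sum (m : ℕ) (hm : 1 < m) (q : ℝ) (hq0 : 0 < q) (hq1 : q < 1)
    (α β : ℝ) (hα : |α| < Real.pi / 2) (hβ0 : 0 ≤ β) (hβ1 : β < 1) :
    ∑' n : ℕ, (1 / ((n : ℝ) + 2)) * (2 * ((n : ℝ) + 2) - Real.cos α - β) *
        (((n + 2) + m - 2).choose (m - 1) : ℝ) * q ^ (n + 1) * (1 - q) ^ m
      = 2 * (1 - (1 - q) ^ m)
        - ((Real.cos α + β) / (q * ((m : ℝ) - 1))) *
            ((1 - q) - (1 - q) ^ m - q * ((m : ℝ) - 1) * (1 - q) ^ m) :=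
  pascal_TSP_reciprocal_sum_general m hm q hq0 hq1 α β
end

section
/- Let |α| < π/2, m ≥ 1 an integer, and 0 ≤ q < 1. Then 2qm/(1-q) + (2 - cos α)(1 - (1-q)^m) ≤ cos α holds if and only if ∑_{n=2}^∞ (2n - cos α) C(n+m-2, m-1) q^{n-1}(1-q)^m ≤ cos α. -/
/-! The series on the right is a combination of the negative binomial series
`∑ C(n+k, k) qⁿ = (1 - q)^-(k+1)` and of `q` times its derivative, and sums in closed form to
exactly the left-hand side, so both sides of the equivalence are the same inequality. -/

theorem Nat.add_one_mul_choose_add_eq (n k : ℕ) :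
    (n + 1) * (n + 1 + k).choose k = (k + 1) * (n + k + 1).choose (k + 1) := by
  have h := Nat.choose_succ_right_eq (n + k + 1) n
  rw [show n + k + 1 - n = k + 1 by omega] at h
  have e1 : (n + 1 + k).choose k = (n + k + 1).choose (n + 1) := by
    rw [show n + k + 1 = n + 1 + k by omega]; exact Nat.choose_symm_add.symm
  have e2 : (n + k + 1).choose (k + 1) = (n + k + 1).choose n := by
    rw [show n + k + 1 = n + (k + 1) by omega]; exact Nat.choose_symm_add.symm
  rw [e1, e2, mul_comm, h, mul_comm]

variable {𝕜 : Type*} [NormedField 𝕜] {q : 𝕜}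

theorem hasSum_choose_mul_geometric_succ (k : ℕ) (hq : ‖q‖ < 1) :
    HasSum (fun n : ℕ ↦ ((n + 1 + k).choose k : 𝕜) * q ^ (n + 1))
      (1 / (1 - q) ^ (k + 1) - 1) := by
  have := (hasSum_nat_add_iff' (f := fun n : ℕ ↦ ((n + k).choose k : 𝕜) * q ^ n) 1).2
    (hasSum_choose_mul_geometric_of_norm_lt_one k hq)
  simpa using this

theorem hasSum_add_one_mul_choose_mul_geometric_succ (k : ℕ) (hq : ‖q‖ < 1) :
    HasSum (fun n : ℕ ↦ ((n : 𝕜) + 1) * (n + 1 + k).choose k * q ^ (n + 1))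
      ((k + 1) * q / (1 - q) ^ (k + 2)) := by
  have key : (fun n : ℕ ↦ ((n : 𝕜) + 1) * (n + 1 + k).choose k * q ^ (n + 1)) =
      fun n ↦ (k + 1) * q * (((n + (k + 1)).choose (k + 1) : 𝕜) * q ^ n) := by
    funext n
    have := congrArg (Nat.cast : ℕ → 𝕜) (Nat.add_one_mul_choose_add_eq n k)
    push_cast at this
    rw [this, ← add_assoc]
    ring
  rw [key, show (k + 1) * q / (1 - q) ^ (k + 2) = (k + 1) * q * (1 / (1 - q) ^ (k + 1 + 1)) by ring]
  exact (hasSum_choose_mul_geometric_of_norm_lt_one (k + 1) hq).mul_left _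

theorem hasSum_two_mul_add_sub_mul_choose_mul_geometric {m : ℕ} (hm : 1 ≤ m) (c : 𝕜)
    (hq : ‖q‖ < 1) :
    HasSum (fun n : ℕ ↦ (2 * ((n : 𝕜) + 2) - c) * ((n + 2 + m - 2).choose (m - 1) : 𝕜) *
        q ^ (n + 1) * (1 - q) ^ m)
      (2 * q * m / (1 - q) + (2 - c) * (1 - (1 - q) ^ m)) := by
  obtain ⟨k, rfl⟩ : ∃ k, m = k + 1 := ⟨m - 1, by omega⟩
  have h1q : 1 - q ≠ 0 := sub_ne_zero.2 fun h ↦ by simp [← h] at hq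
  have key : (fun n : ℕ ↦ (2 * ((n : 𝕜) + 2) - c) *
        ((n + 2 + (k + 1) - 2).choose (k + 1 - 1) : 𝕜) * q ^ (n + 1) * (1 - q) ^ (k + 1)) =
      fun n : ℕ ↦ (2 * (((n : 𝕜) + 1) * ((n + 1 + k).choose k : ℕ) * q ^ (n + 1)) +
        (2 - c) * (((n + 1 + k).choose k : ℕ) * q ^ (n + 1))) * (1 - q) ^ (k + 1) := by
    funext n
    rw [show n + 2 + (k + 1) - 2 = n + 1 + k by omega, Nat.add_sub_cancel]
    ring
  have value : 2 * q * ((k + 1 : ℕ) : 𝕜) / (1 - q) + (2 - c) * (1 - (1 - q) ^ (k + 1)) =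
      (2 * ((k + 1) * q / (1 - q) ^ (k + 2)) + (2 - c) * (1 / (1 - q) ^ (k + 1) - 1)) *
        (1 - q) ^ (k + 1) := by
    field_simp
    push_cast
    ring
  rw [key, value]
  exact (((hasSum_add_one_mul_choose_mul_geometric_succ k hq).mul_left 2).add
    ((hasSum_choose_mul_geometric_succ k hq).mul_left (2 - c))).mul_right _

theorem Phi_mem_TSP_alpha_iff_general (m : ℕ) (hm : 1 ≤ m) (q : ℝ) (hq0 : 0 ≤ q) (hq1 : q < 1)
    (α : ℝ) :
    2 * q * m / (1 - q) + (2 - Real.cos α) * (1 - (1 - q) ^ m) ≤ Real.cos α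
    ↔ ∑' n : ℕ, (2 * ((n : ℝ) + 2) - Real.cos α) *
        (((n + 2) + m - 2).choose (m - 1) : ℝ) * q ^ (n + 1) * (1 - q) ^ m
      ≤ Real.cos α := by
  have hq : ‖q‖ < 1 := by rwa [Real.norm_of_nonneg hq0]
  rw [(hasSum_two_mul_add_sub_mul_choose_mul_geometric hm (Real.cos α) hq).tsum_eq]

theorem Phi_mem_TSP_alpha_iff (m : ℕ) (hm : 1 ≤ m) (q : ℝ) (hq0 : 0 ≤ q) (hq1 : q < 1)
    (α : ℝ) (hα : |α| < Real.pi / 2) :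
    2 * q * m / (1 - q) + (2 - Real.cos α) * (1 - (1 - q) ^ m) ≤ Real.cos α
    ↔ ∑' n : ℕ, (2 * ((n : ℝ) + 2) - Real.cos α) *
        (((n + 2) + m - 2).choose (m - 1) : ℝ) * q ^ (n + 1) * (1 - q) ^ m
      ≤ Real.cos α :=
  Phi_mem_TSP_alpha_iff_general m hm q hq0 hq1 α
end
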